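/- Escaping lemma: Let A ∈ C⁰(M, 𝒦), i.e. A(ω) = [[0,1],[−β(ω),−α(ω)]] with α, β continuous on a compact Hausdorff space M, over a flow φ^t. There exist τ̂ ∈ (0, 1/2) and γ ∈ (0,1) such that for every ω ∈ M and every v in the vertical cone C_γ = {(v₁,v₂) : |v₁| < γ|v₂|}, the image Φ_A(τ̂, ω) v does not belong to C_γ. -/

import Mathlib

open Matrix MeasureTheory Filter Topology

attribute [local instance] Matrix.linftyOpNormedAddCommGroup Matrix.linftyOpNormedRing
  Matrix.linftyOpNormedSpace

noncomputable section

abbrev Mat2 := Matrix (Fin 2) (Fin 2) ℝ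

set_option maxHeartbeats 1000000 in
/-- Escaping lemma: for a continuous kinetic cocycle `A(ω) = [[0,1],[−β(ω),−α(ω)]]` over a flow
on a compact space, there are `τ̂ ∈ (0,1/2)` and `γ ∈ (0,1)` such that every vector in the
vertical cone `C_γ` leaves it under `Φ_A(τ̂,ω)`. -/
theorem stmt11 {M : Type*} [TopologicalSpace M] [CompactSpace M] [T2Space M]
    (φ : ℝ → M → M)
    (hφcont : Continuous fun p : ℝ × M => φ p.1 p.2)
    (hφ0 : ∀ ω, φ 0 ω = ω)
    (hφadd : ∀ s t ω, φ (s + t) ω = φ s (φ t ω))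
    (α β : C(M, ℝ))
    (A : M → Mat2) (hA : ∀ ω, A ω = !![0, 1; -β ω, -α ω])
    (Φ : ℝ → M → Mat2)
    (hΦcont : ∀ ω, Continuous fun t => Φ t ω)
    (hΦ : ∀ t ω, Φ t ω = 1 + ∫ s in (0:ℝ)..t, A (φ s ω) * Φ s ω) :
    ∃ τ ∈ Set.Ioo (0:ℝ) (1/2), ∃ γ ∈ Set.Ioo (0:ℝ) 1, ∀ (ω : M) (v : Fin 2 → ℝ),
      |v 0| < γ * |v 1| →
      ¬ (|(Φ τ ω).mulVec v 0| < γ * |(Φ τ ω).mulVec v 1|) := by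
  classical
  set L : ℝ := 1 + ‖α‖ + ‖β‖ with hLdef
  have hL1 : (1:ℝ) ≤ L := by
    have h1 := norm_nonneg α; have h2 := norm_nonneg β; rw [hLdef]; linarith
  have hL0 : (0:ℝ) < L := lt_of_lt_of_le one_pos hL1
  have hAle : ∀ ω, ‖A ω‖ ≤ L := by
    intro ω
    rw [hA ω]
    have ha : |α ω| ≤ ‖α‖ := by
      simpa [Real.norm_eq_abs] using α.norm_coe_le_norm ω
    have hb : |β ω| ≤ ‖β‖ := by
      simpa [Real.norm_eq_abs] using β.norm_coe_le_norm ω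
    have h : ‖(!![0, 1; -β ω, -α ω] : Mat2)‖₊ ≤ ⟨L, le_of_lt hL0⟩ := by
      rw [Matrix.linfty_opNNNorm_def]
      refine Finset.sup_le fun i _ => ?_
      fin_cases i <;>
      · refine NNReal.coe_le_coe.1 (?_ : _ ≤ L)
        push_cast [Fin.sum_univ_two]
        simp only [Real.norm_eq_abs, abs_neg, Matrix.cons_val', Matrix.cons_val_zero,
          Matrix.cons_val_one, Matrix.head_cons, Matrix.empty_val', Matrix.cons_val_fin_one,
          Matrix.head_fin_const]
        try simp
        try linarith [abs_nonneg (α ω), abs_nonneg (β ω)]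
    have h2 := NNReal.coe_le_coe.2 h
    rwa [coe_nnnorm] at h2
  set τ : ℝ := 1/(10*L) with hτdef
  have hτ0 : 0 < τ := by positivity
  have hLτ : L * τ = 1/10 := by rw [hτdef]; field_simp
  have hτhalf : τ < 1/2 := by
    have : τ ≤ 1/10 := by
      rw [hτdef]; rw [div_le_div_iff₀ (by linarith) (by norm_num)]; linarith
    linarith
  set γ : ℝ := τ/4 with hγdef
  have hγ0 : 0 < γ := by positivity
  have hγ1 : γ < 1 := by rw [hγdef]; linarith
  refine ⟨τ, ⟨hτ0, hτhalf⟩, γ, ⟨hγ0, hγ1⟩, ?_⟩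
  intro ω v hv
  -- continuity facts
  have hφω : Continuous fun s : ℝ => φ s ω :=
    hφcont.comp (continuous_id.prodMk continuous_const)
  have contA : Continuous fun s : ℝ => A (φ s ω) := by
    have hrw : (fun s : ℝ => A (φ s ω)) =
        fun s => !![0, 1; -β (φ s ω), -α (φ s ω)] := funext fun s => hA _
    rw [hrw]
    refine continuous_matrix fun i j => ?_
    fin_cases i <;> fin_cases j <;>
      simp only [Matrix.cons_val', Matrix.cons_val_zero, Matrix.cons_val_one, Matrix.head_cons,
        Matrix.empty_val', Matrix.cons_val_fin_one, Matrix.head_fin_const]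
    · exact continuous_const
    · exact continuous_const
    · exact (β.continuous.comp hφω).neg
    · exact (α.continuous.comp hφω).neg
  set g : ℝ → Mat2 := fun s => A (φ s ω) * Φ s ω with hgdef
  have contg : Continuous g := contA.mul (hΦcont ω)
  have hInt :=
    fun t : ℝ => contg.intervalIntegrable (μ := volume) 0 t
  -- uniform closeness of Φ to the identity on [0, τ]
  have hfc : Continuous fun s : ℝ => ‖Φ s ω - 1‖ := ((hΦcont ω).sub continuous_const).norm
  obtain ⟨s₀, hs₀mem, hs₀max⟩ :=
    isCompact_Icc.exists_isMaxOn (Set.nonempty_Icc.2 (le_of_lt hτ0)) hfc.continuousOn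
  set F : ℝ := ‖Φ s₀ ω - 1‖ with hFdef
  have hF0 : 0 ≤ F := norm_nonneg _
  have hFbound : F ≤ (1 + F)/10 := by
    have h1 : Φ s₀ ω - 1 = ∫ s in (0:ℝ)..s₀, g s := by
      rw [hΦ s₀ ω]; exact add_sub_cancel_left _ _
    have hC : ∀ x ∈ Set.uIoc (0:ℝ) s₀, ‖g x‖ ≤ L * (1 + F) := by
      intro x hx
      have hx' : x ∈ Set.Icc (0:ℝ) τ := by
        rw [Set.uIoc_of_le hs₀mem.1] at hx
        exact ⟨le_of_lt hx.1, hx.2.trans hs₀mem.2⟩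
      have hfx : ‖Φ x ω - 1‖ ≤ F := hs₀max hx'
      have hgx : g x = A (φ x ω) + A (φ x ω) * (Φ x ω - 1) := by
        rw [hgdef]; simp only []; rw [mul_sub, mul_one]; abel
      rw [hgx]
      have hAx := hAle (φ x ω)
      have hAx0 : 0 ≤ ‖A (φ x ω)‖ := norm_nonneg _
      calc ‖A (φ x ω) + A (φ x ω) * (Φ x ω - 1)‖
          ≤ ‖A (φ x ω)‖ + ‖A (φ x ω)‖ * ‖Φ x ω - 1‖ := by
            refine (norm_add_le _ _).trans ?_
            gcongr
            exact norm_mul_le _ _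
        _ ≤ L * (1 + F) := by nlinarith [norm_nonneg (Φ x ω - 1)]
    have h2 := intervalIntegral.norm_integral_le_of_norm_le_const hC
    rw [← h1] at h2
    have hs₀τ : |s₀ - 0| ≤ τ := by
      rw [sub_zero, abs_of_nonneg hs₀mem.1]; exact hs₀mem.2
    have h3 : F ≤ L * (1 + F) * τ := by
      refine h2.trans ?_
      have : 0 ≤ L * (1 + F) := by positivity
      exact mul_le_mul_of_nonneg_left hs₀τ this
    have h4 : L * (1 + F) * τ = (1 + F)/10 := by
      rw [mul_right_comm, hLτ]; ring
    linarith [h3, h4.symm ▸ h3]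
  have hF9 : F ≤ 1/9 := by linarith
  have hΦclose : ∀ s ∈ Set.Icc (0:ℝ) τ, ‖Φ s ω - 1‖ ≤ 1/9 :=
    fun s hs => (hs₀max hs).trans hF9
  -- the vector
  have hv1pos : 0 < |v 1| := by
    by_contra h
    push_neg at h
    have h0 : |v 1| = 0 := le_antisymm h (abs_nonneg _)
    rw [h0, mul_zero] at hv
    exact absurd hv (not_lt.2 (abs_nonneg _))
  have hvn : ‖v‖ ≤ |v 1| := by
    have h0 : |v 0| ≤ |v 1| := by nlinarith
    refine pi_norm_le_iff_of_nonneg (abs_nonneg _) |>.2 fun i => ?_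
    fin_cases i <;> rw [Real.norm_eq_abs]
    · exact h0
    · exact le_refl _
  set u : ℝ → Fin 2 → ℝ := fun s => (Φ s ω) *ᵥ v with hudef
  have hu_close : ∀ s ∈ Set.Icc (0:ℝ) τ, ‖u s - v‖ ≤ 1/9 * |v 1| := by
    intro s hs
    have h1 : u s - v = (Φ s ω - 1) *ᵥ v := by
      rw [hudef]; simp only []; rw [Matrix.sub_mulVec, Matrix.one_mulVec]
    rw [h1]
    calc ‖(Φ s ω - 1) *ᵥ v‖ ≤ ‖Φ s ω - 1‖ * ‖v‖ := Matrix.linfty_opNorm_mulVec _ _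
      _ ≤ 1/9 * |v 1| := mul_le_mul (hΦclose s hs) hvn (norm_nonneg _) (by norm_num)
  have hu_norm : ∀ s ∈ Set.Icc (0:ℝ) τ, ‖u s‖ ≤ 10/9 * |v 1| := by
    intro s hs
    have : ‖u s‖ ≤ ‖v‖ + ‖u s - v‖ := by
      calc ‖u s‖ = ‖v + (u s - v)‖ := by rw [add_sub_cancel]
        _ ≤ ‖v‖ + ‖u s - v‖ := norm_add_le _ _
    linarith [hu_close s hs, hvn]
  -- the integral representation of the components
  have hz : ∀ i : Fin 2, (Φ τ ω).mulVec v i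
      = v i + ∫ s in (0:ℝ)..τ, (A (φ s ω) *ᵥ u s) i := by
    intro i
    let T : Mat2 →L[ℝ] ℝ := LinearMap.toContinuousLinearMap
      { toFun := fun P => (P *ᵥ v) i
        map_add' := fun P Q => by simp [Matrix.add_mulVec]
        map_smul' := fun c P => by simp [Matrix.smul_mulVec] }
    have hTc : ∀ P : Mat2, T P = (P *ᵥ v) i := fun P => rfl
    have hcomm := T.intervalIntegral_comp_comm (hInt τ)
    have : (Φ τ ω).mulVec v i = v i + ((∫ s in (0:ℝ)..τ, g s) *ᵥ v) i := by
      rw [hΦ τ ω, Matrix.add_mulVec, Matrix.one_mulVec]; simp; rfl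
    rw [this]
    congr 1
    rw [← hTc]; refine hcomm.symm.trans ?_
    refine intervalIntegral.integral_congr fun s _ => ?_
    refine (hTc (g s)).trans ?_; rw [hgdef]
    simp only []
    rw [← Matrix.mulVec_mulVec]
  -- component formulas
  have hcomp0 : ∀ s : ℝ, (A (φ s ω) *ᵥ u s) 0 = u s 1 := by
    intro s
    rw [hA]
    simp [Matrix.mulVec, dotProduct, Fin.sum_univ_two]
  have hcont_u : Continuous u := by
    have : Continuous fun P : Mat2 => P *ᵥ v := by
      refine continuous_pi fun i => ?_
      let T : Mat2 →L[ℝ] ℝ := LinearMap.toContinuousLinearMap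
        { toFun := fun P => (P *ᵥ v) i
          map_add' := fun P Q => by simp [Matrix.add_mulVec]
          map_smul' := fun c P => by simp [Matrix.smul_mulVec] }
      exact T.continuous
    exact this.comp (hΦcont ω)
  have hcont_u1 : Continuous fun s => u s 1 := (continuous_apply 1).comp hcont_u
  -- z0
  set E1 : ℝ := ∫ s in (0:ℝ)..τ, (u s 1 - v 1) with hE1def
  have hz0 : (Φ τ ω).mulVec v 0 = τ * v 1 + (v 0 + E1) := by
    rw [hz 0]
    have h1 : (∫ s in (0:ℝ)..τ, (A (φ s ω) *ᵥ u s) 0) = ∫ s in (0:ℝ)..τ, u s 1 :=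
      intervalIntegral.integral_congr fun s _ => hcomp0 s
    have h2 : (∫ s in (0:ℝ)..τ, u s 1)
        = E1 + ∫ s in (0:ℝ)..τ, (v 1 : ℝ) := by
      rw [hE1def, ← intervalIntegral.integral_add (f := fun s => u s 1 - v 1) (g := fun _ => v 1)
        ((hcont_u1.sub continuous_const).intervalIntegrable _ _)
        (intervalIntegrable_const)]
      simp
    rw [h1, h2, intervalIntegral.integral_const]
    simp [smul_eq_mul]
    ring
  have hE1bound : |E1| ≤ 1/9 * |v 1| * τ := by
    have hC : ∀ x ∈ Set.uIoc (0:ℝ) τ, ‖u x 1 - v 1‖ ≤ 1/9 * |v 1| := by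
      intro x hx
      rw [Set.uIoc_of_le (le_of_lt hτ0)] at hx
      have hx' : x ∈ Set.Icc (0:ℝ) τ := ⟨le_of_lt hx.1, hx.2⟩
      have : ‖(u x - v) 1‖ ≤ ‖u x - v‖ := norm_le_pi_norm (u x - v) 1
      rw [Pi.sub_apply] at this
      exact this.trans (hu_close x hx')
    have := intervalIntegral.norm_integral_le_of_norm_le_const hC
    rw [← hE1def] at this
    rw [sub_zero, abs_of_nonneg (le_of_lt hτ0)] at this
    simpa [Real.norm_eq_abs] using this
  -- z1
  set E2 : ℝ := ∫ s in (0:ℝ)..τ, (A (φ s ω) *ᵥ u s) 1 with hE2def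
  have hz1 : (Φ τ ω).mulVec v 1 = v 1 + E2 := hz 1
  have hE2bound : |E2| ≤ 1/9 * |v 1| := by
    have hC : ∀ x ∈ Set.uIoc (0:ℝ) τ, ‖(A (φ x ω) *ᵥ u x) 1‖ ≤ L * (10/9 * |v 1|) := by
      intro x hx
      rw [Set.uIoc_of_le (le_of_lt hτ0)] at hx
      have hx' : x ∈ Set.Icc (0:ℝ) τ := ⟨le_of_lt hx.1, hx.2⟩
      have h1 : ‖(A (φ x ω) *ᵥ u x) 1‖ ≤ ‖A (φ x ω) *ᵥ u x‖ :=
        norm_le_pi_norm (A (φ x ω) *ᵥ u x) 1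
      have h2 : ‖A (φ x ω) *ᵥ u x‖ ≤ ‖A (φ x ω)‖ * ‖u x‖ :=
        Matrix.linfty_opNorm_mulVec _ _
      have h3 : ‖A (φ x ω)‖ * ‖u x‖ ≤ L * (10/9 * |v 1|) :=
        mul_le_mul (hAle _) (hu_norm x hx') (norm_nonneg _) (le_of_lt hL0)
      linarith
    have h := intervalIntegral.norm_integral_le_of_norm_le_const hC
    rw [← hE2def, sub_zero, abs_of_nonneg (le_of_lt hτ0)] at h
    rw [Real.norm_eq_abs] at h
    calc |E2| ≤ L * (10/9 * |v 1|) * τ := h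
      _ = 10/9 * |v 1| * (L * τ) := by ring
      _ = 1/9 * |v 1| := by rw [hLτ]; ring
  -- final estimate
  rw [not_lt]
  have habs1 : |(Φ τ ω).mulVec v 1| ≤ 10/9 * |v 1| := by
    rw [hz1]
    calc |v 1 + E2| ≤ |v 1| + |E2| := abs_add_le _ _
      _ ≤ 10/9 * |v 1| := by linarith
  have habs0 : τ * |v 1| - |v 0| - |E1| ≤ |(Φ τ ω).mulVec v 0| := by
    have h1 : |τ * v 1| ≤ |(Φ τ ω).mulVec v 0| + |v 0 + E1| := by
      have heq : τ * v 1 = (Φ τ ω).mulVec v 0 - (v 0 + E1) := by rw [hz0]; ring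
      rw [heq, sub_eq_add_neg]
      exact (abs_add_le _ _).trans (by rw [abs_neg])
    have h2 : |v 0 + E1| ≤ |v 0| + |E1| := abs_add_le _ _
    have h3 : |τ * v 1| = τ * |v 1| := by
      rw [abs_mul, abs_of_pos hτ0]
    linarith
  have hfin1 : γ * |(Φ τ ω).mulVec v 1| ≤ γ * (10/9 * |v 1|) :=
    mul_le_mul_of_nonneg_left habs1 (le_of_lt hγ0)
  have hfin2 : γ * (10/9 * |v 1|) = 10/36 * (τ * |v 1|) := by rw [hγdef]; ring
  have hfin3 : |v 0| ≤ γ * |v 1| := le_of_lt hv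
  have hfin4 : γ * |v 1| = 1/4 * (τ * |v 1|) := by rw [hγdef]; ring
  have hfin5 : 1/9 * |v 1| * τ = 1/9 * (τ * |v 1|) := by ring
  nlinarith [mul_pos hτ0 hv1pos]
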